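/- For every n ≥ 3, the following identity of polynomials in t holds: D_n^{0,1}(t) = [(2n-1)t - 2]·D_{n-1}^{0,1}(t) + 2t(1-t)·(D_{n-1}^{0,1})'(t) + t·D_{n-1}^1(t) + t²·D_{n-1}^{≥2}(t) + t·D_{n-1}^{0,≥2}(t), where ′ denotes the formal derivative of polynomials. -/
import Mathlib


/-- A signed permutation of `{1,…,n}`, encoded as an (unsigned) permutation of
`Fin n` together with a choice of sign for each position.  The associated
word is `π_1 π_2 ⋯ π_n` where `π_j = ± σ(j)`. -/
abbrev SignedPerm (n : ℕ) := Equiv.Perm (Fin n) × (Fin n → Bool)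

namespace SignedPerm

/-- The letter `π_j` of the word of `p`, for `1 ≤ j ≤ n` (and `0` otherwise). -/
def word {n : ℕ} (p : SignedPerm n) (j : ℕ) : ℤ :=
  if h : 1 ≤ j ∧ j ≤ n then
    (if p.2 ⟨j - 1, by omega⟩ then -1 else 1) * ((p.1 ⟨j - 1, by omega⟩ : ℕ) + 1)
  else 0

/-- The letter `π_j`, with the type `D` convention `π_0 = -π_2`. -/
def entry {n : ℕ} (p : SignedPerm n) (j : ℕ) : ℤ :=
  if j = 0 then -(p.word 2) else p.word j

/-- The set of `D`-descents of `p`: those `i ∈ {0,…,n-1}` with `π_i > π_{i+1}`. -/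
def ddes {n : ℕ} (p : SignedPerm n) : Finset ℕ :=
  (Finset.range n).filter fun i => p.entry (i + 1) < p.entry i

/-- The number of `D`-descents of `p`. -/
def d {n : ℕ} (p : SignedPerm n) : ℕ := p.ddes.card

/-- Membership in the type `D` Coxeter group `D_n ⊆ B_n`:
the number of negative letters is even. -/
def inD {n : ℕ} (p : SignedPerm n) : Prop :=
  Even (Finset.univ.filter (fun i => p.2 i = true)).card

/-- Type '1': descent at position `1` but not at `0`. -/
def type1 {n : ℕ} (p : SignedPerm n) : Prop := 1 ∈ p.ddes ∧ 0 ∉ p.ddes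

/-- Type '0,1': descents at both positions `0` and `1`. -/
def type01 {n : ℕ} (p : SignedPerm n) : Prop := 0 ∈ p.ddes ∧ 1 ∈ p.ddes

/-- Type '≥2': no descent at positions `0` and `1`. -/
def typeGe2 {n : ℕ} (p : SignedPerm n) : Prop := 0 ∉ p.ddes ∧ 1 ∉ p.ddes

/-- Type '0,≥2': descent at position `0` but not at `1`. -/
def type0Ge2 {n : ℕ} (p : SignedPerm n) : Prop := 0 ∈ p.ddes ∧ 1 ∉ p.ddes

instance {n : ℕ} (p : SignedPerm n) : Decidable p.inD := by
  unfold SignedPerm.inD; infer_instance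
instance {n : ℕ} (p : SignedPerm n) : Decidable p.type1 := by
  unfold SignedPerm.type1; infer_instance
instance {n : ℕ} (p : SignedPerm n) : Decidable p.type01 := by
  unfold SignedPerm.type01; infer_instance
instance {n : ℕ} (p : SignedPerm n) : Decidable p.typeGe2 := by
  unfold SignedPerm.typeGe2; infer_instance
instance {n : ℕ} (p : SignedPerm n) : Decidable p.type0Ge2 := by
  unfold SignedPerm.type0Ge2; infer_instance

end SignedPerm

/-- The type `D` Eulerian number `D_{n,k}`: the number of elements of `D_n`
with exactly `k` `D`-descents (zero for `k < 0`). -/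
def eulerD (n : ℕ) (k : ℤ) : ℕ :=
  (Finset.univ.filter fun p : SignedPerm n => p.inD ∧ (p.d : ℤ) = k).card

/-- The sub-Eulerian number `D_{n,k}^1`. -/
def subEuler1 (n : ℕ) (k : ℤ) : ℕ :=
  (Finset.univ.filter fun p : SignedPerm n => p.inD ∧ p.type1 ∧ (p.d : ℤ) = k).card

/-- The sub-Eulerian number `D_{n,k}^{0,1}`. -/
def subEuler01 (n : ℕ) (k : ℤ) : ℕ :=
  (Finset.univ.filter fun p : SignedPerm n => p.inD ∧ p.type01 ∧ (p.d : ℤ) = k).card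

/-- The sub-Eulerian number `D_{n,k}^{≥2}`. -/
def subEulerGe2 (n : ℕ) (k : ℤ) : ℕ :=
  (Finset.univ.filter fun p : SignedPerm n => p.inD ∧ p.typeGe2 ∧ (p.d : ℤ) = k).card

/-- The sub-Eulerian number `D_{n,k}^{0,≥2}`. -/
def subEuler0Ge2 (n : ℕ) (k : ℤ) : ℕ :=
  (Finset.univ.filter fun p : SignedPerm n => p.inD ∧ p.type0Ge2 ∧ (p.d : ℤ) = k).card

/-- The type `D` Eulerian polynomial `D_n(t) = Σ_{π ∈ D_n} t^{d(π)}`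
(with `D_0(t) = D_1(t) = 1`). -/
noncomputable def polyD (n : ℕ) : Polynomial ℚ :=
  ∑ p ∈ Finset.univ.filter (fun p : SignedPerm n => p.inD), Polynomial.X ^ p.d

/-- The sub-Eulerian polynomial `D_n^1(t)`. -/
noncomputable def polyD1 (n : ℕ) : Polynomial ℚ :=
  ∑ p ∈ Finset.univ.filter (fun p : SignedPerm n => p.inD ∧ p.type1), Polynomial.X ^ p.d

/-- The sub-Eulerian polynomial `D_n^{0,1}(t)`. -/
noncomputable def polyD01 (n : ℕ) : Polynomial ℚ :=
  ∑ p ∈ Finset.univ.filter (fun p : SignedPerm n => p.inD ∧ p.type01), Polynomial.X ^ p.d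

/-- The sub-Eulerian polynomial `D_n^{≥2}(t)`. -/
noncomputable def polyDGe2 (n : ℕ) : Polynomial ℚ :=
  ∑ p ∈ Finset.univ.filter (fun p : SignedPerm n => p.inD ∧ p.typeGe2), Polynomial.X ^ p.d

/-- The sub-Eulerian polynomial `D_n^{0,≥2}(t)`. -/
noncomputable def polyD0Ge2 (n : ℕ) : Polynomial ℚ :=
  ∑ p ∈ Finset.univ.filter (fun p : SignedPerm n => p.inD ∧ p.type0Ge2), Polynomial.X ^ p.d


namespace SignedPerm

variable {L : ℕ}

/-- Insert the letter `±(L+1)` at position `j+1` (1-indexed) into `q`. -/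
def ins (q : SignedPerm L) (j : Fin (L + 1)) (s : Bool) : SignedPerm (L + 1) :=
  ((finSuccEquiv' j).trans ((Equiv.optionCongr q.1).trans (finSuccEquiv' (Fin.last L)).symm),
   fun i => ((finSuccEquiv' j) i).elim s q.2)

lemma ins_perm_at (q : SignedPerm L) (j : Fin (L + 1)) (s : Bool) :
    (ins q j s).1 j = Fin.last L := by
  simp [ins, finSuccEquiv'_at, finSuccEquiv'_symm_none]

lemma ins_perm_succAbove (q : SignedPerm L) (j : Fin (L + 1)) (s : Bool) (k : Fin L) :
    (ins q j s).1 (j.succAbove k) = Fin.castSucc (q.1 k) := by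
  simp [ins, finSuccEquiv'_succAbove, finSuccEquiv'_symm_some, Fin.succAbove_last]

lemma ins_sign_at (q : SignedPerm L) (j : Fin (L + 1)) (s : Bool) :
    (ins q j s).2 j = s := by
  simp [ins, finSuccEquiv'_at]

lemma ins_sign_succAbove (q : SignedPerm L) (j : Fin (L + 1)) (s : Bool) (k : Fin L) :
    (ins q j s).2 (j.succAbove k) = q.2 k := by
  simp [ins, finSuccEquiv'_succAbove]

lemma word_ins (q : SignedPerm L) (j : Fin (L + 1)) (s : Bool) (i : ℕ) :
    (ins q j s).word i =
      if i = j.val + 1 then (if s then -1 else 1) * ((L : ℤ) + 1)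
      else if i ≤ j.val then q.word i else q.word (i - 1) := by
  have hj := j.isLt
  by_cases hr : 1 ≤ i ∧ i ≤ L + 1
  · unfold SignedPerm.word
    rw [dif_pos hr]
    by_cases hij : i = j.val + 1
    · have hjeq : (⟨i - 1, by omega⟩ : Fin (L + 1)) = j := by
        apply Fin.ext; simp; omega
      rw [if_pos hij, hjeq, ins_perm_at, ins_sign_at]
      simp [Fin.last]
    · rw [if_neg hij]
      have hne : (⟨i - 1, by omega⟩ : Fin (L + 1)) ≠ j := by
        intro h
        have := congrArg Fin.val h
        simp at this; omega
      obtain ⟨k, hk⟩ := Fin.exists_succAbove_eq hne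
      rw [← hk, ins_perm_succAbove, ins_sign_succAbove]
      by_cases hlt : (k.val : ℕ) < j.val
      · have hsa : j.succAbove k = Fin.castSucc k :=
          Fin.succAbove_of_castSucc_lt _ _ (by simpa [Fin.lt_def] using hlt)
        have hkv : k.val = i - 1 := by
          have := congrArg Fin.val hk
          rw [hsa] at this
          simpa using this
        have hile : i ≤ j.val := by omega
        rw [if_pos hile, dif_pos (show 1 ≤ i ∧ i ≤ L by omega)]
        have hkk : (⟨i - 1, by omega⟩ : Fin L) = k := by
          apply Fin.ext; simp; omega
        rw [hkk]
        simp
      · have hsa : j.succAbove k = k.succ :=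
          Fin.succAbove_of_le_castSucc _ _ (by simpa [Fin.le_def] using Nat.le_of_not_lt hlt)
        have hkv : k.val + 1 = i - 1 := by
          have := congrArg Fin.val hk
          rw [hsa] at this
          simpa using this
        have hile : ¬ (i ≤ j.val) := by omega
        rw [if_neg hile, dif_pos (show 1 ≤ i - 1 ∧ i - 1 ≤ L by omega)]
        have hkk : (⟨i - 1 - 1, by omega⟩ : Fin L) = k := by
          apply Fin.ext; simp; omega
        rw [hkk]
        simp [Fin.coe_castSucc]
  · unfold SignedPerm.word
    rw [dif_neg hr, if_neg (by omega)]
    by_cases h0 : i = 0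
    · subst h0
      rw [if_pos (by omega), dif_neg (by omega)]
    · rw [if_neg (by omega), dif_neg (by omega)]


lemma ins_injective :
    Function.Injective (fun x : SignedPerm L × Fin (L + 1) × Bool => ins x.1 x.2.1 x.2.2) := by
  rintro ⟨q, j, s⟩ ⟨q', j', s'⟩ h
  simp only at h
  have h1 : (ins q j s).1 = (ins q' j' s').1 := congrArg Prod.fst h
  have h2 : (ins q j s).2 = (ins q' j' s').2 := congrArg Prod.snd h
  have hj : j = j' := by
    have e : (ins q j s).1 j = (ins q j s).1 j' := by
      rw [ins_perm_at, h1, ins_perm_at]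
    exact (ins q j s).1.injective e
  subst hj
  have hs : s = s' := by
    have := congrArg (fun f => f j) h2
    simpa [ins_sign_at] using this
  subst hs
  have hq1 : q.1 = q'.1 := by
    apply Equiv.ext; intro k
    have : (ins q j s).1 (j.succAbove k) = (ins q' j s).1 (j.succAbove k) := by rw [h1]
    rw [ins_perm_succAbove, ins_perm_succAbove] at this
    exact Fin.castSucc_injective _ this
  have hq2 : q.2 = q'.2 := by
    funext k
    have : (ins q j s).2 (j.succAbove k) = (ins q' j s).2 (j.succAbove k) := by rw [h2]
    simpa [ins_sign_succAbove] using this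
  have : q = q' := Prod.ext hq1 hq2
  rw [this]

lemma ins_bijective :
    Function.Bijective (fun x : SignedPerm L × Fin (L + 1) × Bool => ins x.1 x.2.1 x.2.2) := by
  rw [Fintype.bijective_iff_injective_and_card]
  refine ⟨ins_injective, ?_⟩
  simp [Fintype.card_prod, Fintype.card_perm, Fintype.card_fun, Fintype.card_fin,
    Fintype.card_bool, Nat.factorial_succ, pow_succ]
  ring

lemma sum_ins {M : Type*} [AddCommMonoid M] (f : SignedPerm (L + 1) → M) :
    ∑ p : SignedPerm (L + 1), f p
      = ∑ q : SignedPerm L, ∑ j : Fin (L + 1), ∑ s : Bool, f (ins q j s) := by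
  rw [← Fintype.sum_bijective _ ins_bijective _ f (fun x => rfl)]
  rw [Fintype.sum_prod_type]
  refine Finset.sum_congr rfl fun q _ => ?_
  rw [Fintype.sum_prod_type]

lemma word_bound (q : SignedPerm L) (i : ℕ) : -(L : ℤ) ≤ q.word i ∧ q.word i ≤ L := by
  unfold SignedPerm.word
  split
  · rename_i h
    have hv : ((q.1 ⟨i - 1, by omega⟩ : Fin L) : ℕ) < L := Fin.isLt _
    split <;> constructor <;> push_cast <;> omega
  · constructor <;> simp

lemma mem_ddes {n : ℕ} (p : SignedPerm n) (i : ℕ) :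
    i ∈ p.ddes ↔ i < n ∧ p.entry (i + 1) < p.entry i := by
  simp [SignedPerm.ddes]

lemma d_eq_sum {n : ℕ} (p : SignedPerm n) :
    p.d = ∑ i ∈ Finset.range n, (if p.entry (i + 1) < p.entry i then 1 else 0) := by
  rw [SignedPerm.d, SignedPerm.ddes, Finset.card_filter]


lemma negcount_ins (q : SignedPerm L) (j : Fin (L + 1)) (s : Bool) :
    (Finset.univ.filter (fun i => (ins q j s).2 i = true)).card
      = (if s then 1 else 0) + (Finset.univ.filter (fun i => q.2 i = true)).card := by
  rw [Finset.card_filter, Finset.card_filter]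
  rw [Fin.sum_univ_succAbove _ j]
  congr 1
  · rw [ins_sign_at]
  · refine Finset.sum_congr rfl fun k _ => ?_
    rw [ins_sign_succAbove]

lemma inD_ins_false (q : SignedPerm L) (j : Fin (L + 1)) :
    (ins q j false).inD ↔ q.inD := by
  unfold SignedPerm.inD
  rw [negcount_ins]
  simp

lemma inD_ins_true (q : SignedPerm L) (j : Fin (L + 1)) :
    (ins q j true).inD ↔ ¬ q.inD := by
  unfold SignedPerm.inD
  rw [negcount_ins]
  simp [Nat.even_iff, Nat.add_mod]
  omega

variable {M : ℕ}

/-- Flip the sign of the first letter. -/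
def sigma (q : SignedPerm (M + 1)) : SignedPerm (M + 1) :=
  (q.1, Function.update q.2 0 (!q.2 0))

lemma sigma_sigma (q : SignedPerm (M + 1)) : sigma (sigma q) = q := by
  unfold sigma
  simp only [Function.update_self, Function.update_idem, Bool.not_not]
  rw [Function.update_eq_self]

lemma word_sigma (q : SignedPerm (M + 1)) (i : ℕ) :
    (sigma q).word i = if i = 1 then -(q.word 1) else q.word i := by
  unfold SignedPerm.word sigma
  by_cases h1 : i = 1
  · subst h1
    rw [if_pos rfl, dif_pos (by omega), dif_pos (by omega)]
    have h0 : (⟨1 - 1, by omega⟩ : Fin (M + 1)) = 0 := rfl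
    rw [h0]
    simp only [Function.update_self]
    cases q.2 0 <;> simp <;> ring
  · rw [if_neg h1]
    split
    · rename_i h
      have h0 : (⟨i - 1, by omega⟩ : Fin (M + 1)) ≠ 0 := by
        intro he
        have := congrArg Fin.val he
        simp at this; omega
      simp only [Function.update_of_ne h0]
    · rfl

lemma inD_sigma (q : SignedPerm (M + 1)) : (sigma q).inD ↔ ¬ q.inD := by
  unfold SignedPerm.inD
  rw [Finset.card_filter, Finset.card_filter,
    ← Finset.add_sum_erase _ _ (Finset.mem_univ (0 : Fin (M + 1))),
    ← Finset.add_sum_erase _ _ (Finset.mem_univ (0 : Fin (M + 1)))]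
  have htail : ∀ i ∈ Finset.univ.erase (0 : Fin (M + 1)),
      (if (sigma q).2 i = true then 1 else 0) = (if q.2 i = true then (1:ℕ) else 0) := by
    intro i hi
    rw [Finset.mem_erase] at hi
    unfold sigma
    simp only [Function.update_of_ne hi.1]
  rw [Finset.sum_congr rfl htail]
  have hσ0 : (sigma q).2 0 = !q.2 0 := by
    unfold sigma; simp
  rw [hσ0]
  cases h : q.2 0 <;> simp [Nat.even_iff, Nat.add_mod] <;> omega


lemma zero_mem_ddes {n : ℕ} (p : SignedPerm n) :
    0 ∈ p.ddes ↔ 0 < n ∧ p.word 1 < -(p.word 2) := by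
  rw [mem_ddes]
  unfold SignedPerm.entry
  simp

lemma succ_mem_ddes {n : ℕ} (p : SignedPerm n) (i : ℕ) :
    (i + 1) ∈ p.ddes ↔ i + 1 < n ∧ p.word (i + 2) < p.word (i + 1) := by
  rw [mem_ddes]
  unfold SignedPerm.entry
  simp

lemma one_mem_ddes {n : ℕ} (p : SignedPerm n) :
    1 ∈ p.ddes ↔ 1 < n ∧ p.word 2 < p.word 1 := by
  have h := succ_mem_ddes p 0
  norm_num at h
  exact h

lemma zero_mem_ddes_sigma (q : SignedPerm (M + 2)) :
    0 ∈ (sigma q).ddes ↔ 1 ∈ q.ddes := by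
  rw [zero_mem_ddes, one_mem_ddes, word_sigma, word_sigma,
    if_pos rfl, if_neg (by omega)]
  constructor
  · rintro ⟨-, h⟩; exact ⟨by omega, by omega⟩
  · rintro ⟨-, h⟩; exact ⟨by omega, by omega⟩

lemma one_mem_ddes_sigma (q : SignedPerm (M + 2)) :
    1 ∈ (sigma q).ddes ↔ 0 ∈ q.ddes := by
  rw [one_mem_ddes, zero_mem_ddes, word_sigma, word_sigma,
    if_pos rfl, if_neg (by omega)]
  constructor
  · rintro ⟨-, h⟩; exact ⟨by omega, by omega⟩
  · rintro ⟨-, h⟩; exact ⟨by omega, by omega⟩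

lemma succ_succ_mem_ddes_sigma (q : SignedPerm (M + 2)) (i : ℕ) :
    (i + 2) ∈ (sigma q).ddes ↔ (i + 2) ∈ q.ddes := by
  have h1 := succ_mem_ddes (sigma q) (i + 1)
  have h2 := succ_mem_ddes q (i + 1)
  rw [word_sigma, word_sigma, if_neg (by omega), if_neg (by omega)] at h1
  rw [show i + 1 + 1 = i + 2 from rfl] at h1 h2
  rw [h1, h2]

lemma type01_sigma (q : SignedPerm (M + 2)) : (sigma q).type01 ↔ q.type01 := by
  unfold SignedPerm.type01
  rw [zero_mem_ddes_sigma, one_mem_ddes_sigma]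
  tauto

lemma d_sigma (q : SignedPerm (M + 2)) : (sigma q).d = q.d := by
  rw [d_eq_sum, d_eq_sum, Finset.sum_range_succ', Finset.sum_range_succ',
    Finset.sum_range_succ', Finset.sum_range_succ']
  have htail : ∀ i ∈ Finset.range M,
      (if (sigma q).entry (i + 1 + 1 + 1) < (sigma q).entry (i + 1 + 1) then (1:ℕ) else 0)
        = (if q.entry (i + 1 + 1 + 1) < q.entry (i + 1 + 1) then 1 else 0) := by
    intro i _
    have a1 : (sigma q).entry (i + 1 + 1 + 1) = q.entry (i + 1 + 1 + 1) := by
      unfold SignedPerm.entry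
      rw [if_neg (by omega), if_neg (by omega), word_sigma, if_neg (by omega)]
    have a2 : (sigma q).entry (i + 1 + 1) = q.entry (i + 1 + 1) := by
      unfold SignedPerm.entry
      rw [if_neg (by omega), if_neg (by omega), word_sigma, if_neg (by omega)]
    rw [a1, a2]
  rw [Finset.sum_congr rfl htail]
  have e0 : (sigma q).entry 0 = -(q.word 2) := by
    unfold SignedPerm.entry
    rw [if_pos rfl, word_sigma, if_neg (by omega)]
  have e1 : (sigma q).entry 1 = -(q.word 1) := by
    unfold SignedPerm.entry
    rw [if_neg (by omega), word_sigma, if_pos rfl]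
  have e2 : (sigma q).entry 2 = q.word 2 := by
    unfold SignedPerm.entry
    rw [if_neg (by omega), word_sigma, if_neg (by omega)]
  have f0 : q.entry 0 = -(q.word 2) := by
    unfold SignedPerm.entry; rw [if_pos rfl]
  have f1 : q.entry 1 = q.word 1 := by
    unfold SignedPerm.entry; rw [if_neg (by omega)]
  have f2 : q.entry 2 = q.word 2 := by
    unfold SignedPerm.entry; rw [if_neg (by omega)]
  rw [show (0:ℕ) + 1 = 1 from rfl, show (1:ℕ) + 1 = 2 from rfl]
  rw [e0, e1, e2, f0, f1, f2]
  have hc1 : (-(q.word 1) < -(q.word 2)) ↔ (q.word 2 < q.word 1) := by omega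
  have hc2 : (q.word 2 < -(q.word 1)) ↔ (q.word 1 < -(q.word 2)) := by omega
  rw [if_congr hc1 rfl rfl, if_congr hc2 rfl rfl]
  ring


lemma d_eq_sum_mem {n : ℕ} (p : SignedPerm n) :
    p.d = ∑ i ∈ Finset.range n, (if i ∈ p.ddes then 1 else 0) := by
  rw [SignedPerm.d, SignedPerm.ddes, Finset.card_filter]
  refine Finset.sum_congr rfl fun i hi => ?_
  simp [SignedPerm.ddes, Finset.mem_filter, hi]

lemma word_ins_at (q : SignedPerm L) (j : Fin (L + 1)) (s : Bool) :
    (ins q j s).word (j.val + 1) = (if s then -1 else 1) * ((L : ℤ) + 1) := by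
  rw [word_ins, if_pos rfl]

lemma word_ins_le (q : SignedPerm L) (j : Fin (L + 1)) (s : Bool)
    {i : ℕ} (h : i ≤ j.val) : (ins q j s).word i = q.word i := by
  rw [word_ins, if_neg (by omega), if_pos h]

lemma word_ins_gt (q : SignedPerm L) (j : Fin (L + 1)) (s : Bool)
    {i : ℕ} (h : j.val + 1 < i) : (ins q j s).word i = q.word (i - 1) := by
  rw [word_ins, if_neg (by omega), if_neg (by omega)]

lemma mem_ddes' {n : ℕ} (p : SignedPerm n) {i : ℕ} (h : 1 ≤ i) :
    i ∈ p.ddes ↔ i < n ∧ p.word (i + 1) < p.word i := by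
  rw [mem_ddes]
  unfold SignedPerm.entry
  rw [if_neg (by omega), if_neg (by omega)]

lemma mem_ddes_ins_low (q : SignedPerm L) (j : Fin (L + 1)) (s : Bool)
    (h2 : 2 ≤ j.val) {i : ℕ} (hi : i < j.val) :
    i ∈ (ins q j s).ddes ↔ i ∈ q.ddes := by
  have hjL := j.isLt
  cases i with
  | zero =>
    rw [zero_mem_ddes, zero_mem_ddes, word_ins_le q j s (by omega),
      word_ins_le q j s (by omega)]
    constructor <;> rintro ⟨-, h⟩ <;> exact ⟨by omega, h⟩
  | succ i =>
    rw [mem_ddes' _ (by omega), mem_ddes' _ (by omega),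
      word_ins_le q j s (by omega), word_ins_le q j s (by omega)]
    constructor <;> rintro ⟨-, h⟩ <;> exact ⟨by omega, h⟩

lemma mem_ddes_ins_at (q : SignedPerm L) (j : Fin (L + 1)) (s : Bool)
    (h1 : 1 ≤ j.val) :
    j.val ∈ (ins q j s).ddes ↔ s = true := by
  have hjL := j.isLt
  rw [mem_ddes' _ h1, word_ins_at, word_ins_le q j s (le_refl _)]
  have hb := word_bound q j.val
  cases s <;> norm_num <;> omega

lemma mem_ddes_ins_after (q : SignedPerm L) (j : Fin (L + 1)) (s : Bool)
    (hv : j.val + 1 < L + 1) :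
    (j.val + 1) ∈ (ins q j s).ddes ↔ s = false := by
  rw [mem_ddes' _ (by omega), word_ins_gt q j s (by omega), word_ins_at]
  rw [show j.val + 1 + 1 - 1 = j.val + 1 from rfl]
  have hb := word_bound q (j.val + 1)
  cases s <;> norm_num <;> omega

lemma mem_ddes_ins_high (q : SignedPerm L) (j : Fin (L + 1)) (s : Bool)
    {i : ℕ} (h : j.val + 2 ≤ i) (hiL : i < L + 1) :
    i ∈ (ins q j s).ddes ↔ (i - 1) ∈ q.ddes := by
  obtain ⟨a, ha⟩ : ∃ a, i = a + 2 := ⟨i - 2, by omega⟩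
  subst ha
  rw [mem_ddes' _ (by omega), mem_ddes' _ (by omega),
    word_ins_gt q j s (by omega), word_ins_gt q j s (by omega)]
  rw [show a + 2 + 1 - 1 = a + 2 from rfl, show a + 2 - 1 = a + 1 from rfl]
  constructor <;> rintro ⟨-, h'⟩ <;> exact ⟨by omega, h'⟩

lemma mem0_ddes_ins_v1 (q : SignedPerm L) (j : Fin (L + 1)) (s : Bool)
    (h : j.val = 1) : 0 ∈ (ins q j s).ddes ↔ s = true := by
  rw [zero_mem_ddes, word_ins_le q j s (by omega), show (2:ℕ) = j.val + 1 by omega,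
    word_ins_at]
  have hb := word_bound q 1
  have hjL := j.isLt
  cases s <;> norm_num <;> omega

lemma mem1_ddes_ins_v1 (q : SignedPerm L) (j : Fin (L + 1)) (s : Bool)
    (h : j.val = 1) : 1 ∈ (ins q j s).ddes ↔ s = true := by
  rw [one_mem_ddes, show (2:ℕ) = j.val + 1 by omega, word_ins_at,
    word_ins_le q j s (by omega)]
  have hb := word_bound q 1
  have hjL := j.isLt
  cases s <;> norm_num <;> omega

lemma not_type01_ins_v0 (q : SignedPerm L) (j : Fin (L + 1)) (s : Bool)
    (h : j.val = 0) : ¬ (ins q j s).type01 := by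
  have hb := word_bound q 1
  cases s
  · intro ht
    have h0 := ht.1
    rw [zero_mem_ddes] at h0
    have e1 := word_ins_at q j false
    rw [h] at e1
    norm_num at e1
    have e2 : (ins q j false).word 2 = q.word 1 := by
      rw [word_ins_gt q j false (by omega)]
    rw [e1, e2] at h0
    omega
  · intro ht
    have h1 := ht.2
    rw [one_mem_ddes] at h1
    have e1 := word_ins_at q j true
    rw [h] at e1
    norm_num at e1
    have e2 : (ins q j true).word 2 = q.word 1 := by
      rw [word_ins_gt q j true (by omega)]
    rw [e1, e2] at h1
    omega


lemma sum_split {M : Type*} [AddCommMonoid M] (N v : ℕ) (hv : v ≤ N) (f : ℕ → M) :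
    ∑ i ∈ Finset.range N, f i
      = ∑ i ∈ Finset.range v, f i + ∑ i ∈ Finset.range (N - v), f (v + i) := by
  rw [← Finset.sum_range_add]
  have : v + (N - v) = N := by omega
  rw [this]

lemma ddes_lt {n : ℕ} {p : SignedPerm n} {i : ℕ} (h : i ∈ p.ddes) : i < n :=
  ((mem_ddes p i).mp h).1

lemma d_ins_big (q : SignedPerm L) (j : Fin (L + 1)) (s : Bool) (h2 : 2 ≤ j.val) :
    (ins q j s).d + (if j.val ∈ q.ddes then 1 else 0)
      = q.d + (if j.val = L ∧ s = false then 0 else 1) := by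
  have hjL := j.isLt
  rw [d_eq_sum_mem, d_eq_sum_mem, sum_split (L + 1) j.val (by omega),
    sum_split L j.val (by omega)]
  have hlow : ∀ i ∈ Finset.range j.val,
      (if i ∈ (ins q j s).ddes then (1:ℕ) else 0) = (if i ∈ q.ddes then 1 else 0) := by
    intro i hi
    simp only [mem_ddes_ins_low q j s h2 (Finset.mem_range.mp hi)]
  rw [Finset.sum_congr rfl hlow]
  by_cases hvL : j.val = L
  · rw [show L + 1 - j.val = 1 by omega, show L - j.val = 0 by omega,
      Finset.sum_range_one, Finset.sum_range_zero]
    simp only [Nat.add_zero, mem_ddes_ins_at q j s (by omega)]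
    have hnot : j.val ∉ q.ddes := fun hm => by have := ddes_lt hm; omega
    rw [if_neg hnot, if_congr (show (j.val = L ∧ s = false) ↔ (s = false) by tauto) rfl rfl]
    cases s <;> norm_num
  · rw [show L + 1 - j.val = 2 + (L - 1 - j.val) by omega,
      show L - j.val = 1 + (L - 1 - j.val) by omega,
      Finset.sum_range_add, Finset.sum_range_add,
      Finset.sum_range_succ (fun i => if j.val + i ∈ (ins q j s).ddes then (1:ℕ) else 0) 1,
      Finset.sum_range_one, Finset.sum_range_one]
    simp only [Nat.add_zero, mem_ddes_ins_at q j s (by omega),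
      mem_ddes_ins_after q j s (by omega)]
    have htail : ∀ i ∈ Finset.range (L - 1 - j.val),
        (if j.val + (2 + i) ∈ (ins q j s).ddes then (1:ℕ) else 0)
          = (if j.val + (1 + i) ∈ q.ddes then 1 else 0) := by
      intro i hi
      have hm := Finset.mem_range.mp hi
      simp only [mem_ddes_ins_high q j s (show j.val + 2 ≤ j.val + (2 + i) by omega)
        (show j.val + (2 + i) < L + 1 by omega),
        show j.val + (2 + i) - 1 = j.val + (1 + i) from by omega]
    rw [Finset.sum_congr rfl htail,
      if_congr (show (j.val = L ∧ s = false) ↔ False by simp; omega) rfl rfl]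
    cases s <;> norm_num <;> omega

lemma d_ins_v1 (q : SignedPerm L) (j : Fin (L + 1)) (hL : 2 ≤ L) (h : j.val = 1) :
    (ins q j true).d + (if 0 ∈ q.ddes then 1 else 0) + (if 1 ∈ q.ddes then 1 else 0)
      = q.d + 2 := by
  rw [d_eq_sum_mem, d_eq_sum_mem, sum_split (L + 1) 3 (by omega), sum_split L 2 (by omega),
    Finset.sum_range_succ (fun i => if i ∈ (ins q j true).ddes then (1:ℕ) else 0) 2,
    Finset.sum_range_succ (fun i => if i ∈ (ins q j true).ddes then (1:ℕ) else 0) 1,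
    Finset.sum_range_one,
    Finset.sum_range_succ (fun i => if i ∈ q.ddes then (1:ℕ) else 0) 1,
    Finset.sum_range_one]
  simp only [mem0_ddes_ins_v1 q j true h, mem1_ddes_ins_v1 q j true h]
  have h2 : ((2:ℕ) ∈ (ins q j true).ddes) ↔ (true = false) := by
    have := mem_ddes_ins_after q j true (by omega)
    rwa [h] at this
  simp only [h2]
  have htail : ∀ i ∈ Finset.range (L + 1 - 3),
      (if 3 + i ∈ (ins q j true).ddes then (1:ℕ) else 0)
        = (if 2 + i ∈ q.ddes then 1 else 0) := by
    intro i hi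
    have hm := Finset.mem_range.mp hi
    simp only [mem_ddes_ins_high q j true (show j.val + 2 ≤ 3 + i by omega)
      (show 3 + i < L + 1 by omega), show 3 + i - 1 = 2 + i from by omega]
  rw [Finset.sum_congr rfl htail, show L + 1 - 3 = L - 2 from by omega]
  norm_num
  omega


open Polynomial in
/-- The contribution of inserting at slot `v` (0-indexed). -/
noncomputable def slot (q : SignedPerm L) (s : Bool) (v : ℕ) : Polynomial ℚ :=
  if h : v < L + 1 then
    (if (ins q ⟨v, h⟩ s).type01 then Polynomial.X ^ ((ins q ⟨v, h⟩ s).d) else 0)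
  else 0

lemma sum_slot (q : SignedPerm L) (s : Bool) :
    (∑ j : Fin (L + 1),
        if (ins q j s).type01 then Polynomial.X ^ ((ins q j s).d) else (0 : Polynomial ℚ))
      = ∑ v ∈ Finset.range (L + 1), slot q s v := by
  rw [← Fin.sum_univ_eq_sum_range (slot q s) (L + 1)]
  refine Finset.sum_congr rfl fun j _ => ?_
  rw [slot, dif_pos j.isLt]

lemma slot_v0 (q : SignedPerm L) (s : Bool) : slot q s 0 = 0 := by
  rw [slot, dif_pos (Nat.succ_pos L), if_neg (not_type01_ins_v0 q _ s rfl)]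

lemma slot_v1_false (q : SignedPerm L) (hL : 2 ≤ L) : slot q false 1 = 0 := by
  have h1 : (1:ℕ) < L + 1 := by omega
  rw [slot, dif_pos h1, if_neg]
  intro ht
  have h0 := ht.1
  rw [mem0_ddes_ins_v1 q _ false rfl] at h0
  exact Bool.false_ne_true h0

lemma slot_v1_true (q : SignedPerm L) (hL : 2 ≤ L) :
    slot q true 1 = Polynomial.X ^ (q.d + 2 - (if 0 ∈ q.ddes then 1 else 0)
      - (if 1 ∈ q.ddes then 1 else 0)) := by
  have h1 : (1:ℕ) < L + 1 := by omega
  rw [slot, dif_pos h1, if_pos]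
  · have hd := d_ins_v1 q ⟨1, h1⟩ hL rfl
    congr 1
    omega
  · exact ⟨(mem0_ddes_ins_v1 q _ true rfl).mpr rfl, (mem1_ddes_ins_v1 q _ true rfl).mpr rfl⟩

lemma slot_mid (q : SignedPerm L) (s : Bool) {v : ℕ} (h2 : 2 ≤ v) (hvL : v < L)
    (h01 : q.type01) :
    slot q s v = if v ∈ q.ddes then Polynomial.X ^ (q.d) else Polynomial.X ^ (q.d + 1) := by
  have hv : v < L + 1 := by omega
  rw [slot, dif_pos hv]
  have htype : (ins q ⟨v, hv⟩ s).type01 :=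
    ⟨(mem_ddes_ins_low q ⟨v, hv⟩ s h2 (show 0 < v by omega)).mpr h01.1,
     (mem_ddes_ins_low q ⟨v, hv⟩ s h2 (show 1 < v by omega)).mpr h01.2⟩
  rw [if_pos htype]
  have hd := d_ins_big q ⟨v, hv⟩ s h2
  rw [show ((⟨v, hv⟩ : Fin (L + 1)) : ℕ) = v from rfl] at hd
  rw [if_neg (show ¬(v = L ∧ s = false) from by rintro ⟨h, -⟩; omega)] at hd
  by_cases hmem : v ∈ q.ddes
  · rw [if_pos hmem] at hd
    rw [if_pos hmem, show (ins q ⟨v, hv⟩ s).d = q.d from by omega]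
  · rw [if_neg hmem] at hd
    rw [if_neg hmem, show (ins q ⟨v, hv⟩ s).d = q.d + 1 from by omega]

lemma slot_last (q : SignedPerm L) (s : Bool) (hL : 2 ≤ L) (h01 : q.type01) :
    slot q s L = if s then Polynomial.X ^ (q.d + 1) else Polynomial.X ^ (q.d) := by
  have hv : L < L + 1 := by omega
  rw [slot, dif_pos hv]
  have htype : (ins q ⟨L, hv⟩ s).type01 :=
    ⟨(mem_ddes_ins_low q ⟨L, hv⟩ s hL (show 0 < L by omega)).mpr h01.1,
     (mem_ddes_ins_low q ⟨L, hv⟩ s hL (show 1 < L by omega)).mpr h01.2⟩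
  rw [if_pos htype]
  have hd := d_ins_big q ⟨L, hv⟩ s hL
  rw [show ((⟨L, hv⟩ : Fin (L + 1)) : ℕ) = L from rfl] at hd
  have hnot : L ∉ q.ddes := fun hm => by have := ddes_lt hm; omega
  rw [if_neg hnot] at hd
  cases s
  · norm_num at hd
    rw [if_neg Bool.false_ne_true, show (ins q ⟨L, hv⟩ false).d = q.d from by omega]
  · norm_num at hd
    rw [if_pos rfl, show (ins q ⟨L, hv⟩ true).d = q.d + 1 from by omega]

lemma slot_ge2_not01 (q : SignedPerm L) (s : Bool) {v : ℕ} (h2 : 2 ≤ v) (hv : v < L + 1)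
    (h01 : ¬ q.type01) : slot q s v = 0 := by
  rw [slot, dif_pos hv, if_neg]
  intro ht
  exact h01 ⟨(mem_ddes_ins_low q ⟨v, hv⟩ s h2 (show 0 < v by omega)).mp ht.1,
    (mem_ddes_ins_low q ⟨v, hv⟩ s h2 (show 1 < v by omega)).mp ht.2⟩


lemma cnt_le (K : ℕ) (P : ℕ → Prop) [DecidablePred P] :
    (∑ i ∈ Finset.range K, if P i then (1:ℕ) else 0) ≤ K := by
  calc (∑ i ∈ Finset.range K, if P i then (1:ℕ) else 0)
      ≤ ∑ _i ∈ Finset.range K, 1 := Finset.sum_le_sum (fun i _ => by split <;> omega)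
    _ = K := by simp

lemma sum_ite_const {A : Type*} [AddCommMonoid A] (K : ℕ) (P : ℕ → Prop) [DecidablePred P]
    (X Y : A) :
    ∑ i ∈ Finset.range K, (if P i then X else Y)
      = (∑ i ∈ Finset.range K, if P i then 1 else 0) • X
        + (K - ∑ i ∈ Finset.range K, if P i then 1 else 0) • Y := by
  induction K with
  | zero => simp
  | succ K ih =>
    have hle := cnt_le K P
    rw [Finset.sum_range_succ, Finset.sum_range_succ, ih]
    by_cases h : P K
    · rw [if_pos h, if_pos h,
        show K + 1 - ((∑ i ∈ Finset.range K, if P i then 1 else 0) + 1)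
          = K - (∑ i ∈ Finset.range K, if P i then 1 else 0) from by omega,
        succ_nsmul]
      abel
    · rw [if_neg h, if_neg h, Nat.add_zero,
        show K + 1 - (∑ i ∈ Finset.range K, if P i then 1 else 0)
          = (K - (∑ i ∈ Finset.range K, if P i then 1 else 0)) + 1 from by omega,
        succ_nsmul]
      abel

lemma d_decomp (q : SignedPerm L) (hL : 2 ≤ L) :
    q.d = (if 0 ∈ q.ddes then 1 else 0) + (if 1 ∈ q.ddes then 1 else 0)
      + ∑ i ∈ Finset.range (L - 2), (if 2 + i ∈ q.ddes then 1 else 0) := by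
  rw [d_eq_sum_mem, sum_split L 2 hL, Finset.sum_range_succ _ 1, Finset.sum_range_one]

lemma sum_slot_false_01 (q : SignedPerm L) (hL : 2 ≤ L) (h01 : q.type01) :
    ∑ v ∈ Finset.range (L + 1), slot q false v
      = (q.d - 1) • Polynomial.X ^ q.d + (L - q.d) • Polynomial.X ^ (q.d + 1) := by
  have hdec := d_decomp q hL
  rw [if_pos h01.1, if_pos h01.2] at hdec
  have hle := cnt_le (L - 2) (fun i => 2 + i ∈ q.ddes)
  rw [sum_split (L + 1) 2 (by omega), Finset.sum_range_succ _ 1, Finset.sum_range_one,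
    slot_v0, slot_v1_false q hL,
    show L + 1 - 2 = (L - 2) + 1 from by omega, Finset.sum_range_succ]
  rw [show 2 + (L - 2) = L from by omega, slot_last q false hL h01]
  have hmid : ∀ i ∈ Finset.range (L - 2),
      slot q false (2 + i)
        = if 2 + i ∈ q.ddes then Polynomial.X ^ q.d else Polynomial.X ^ (q.d + 1) := by
    intro i hi
    exact slot_mid q false (by omega) (by have := Finset.mem_range.mp hi; omega) h01
  rw [Finset.sum_congr rfl hmid,
    sum_ite_const (L - 2) (fun i => 2 + i ∈ q.ddes) (Polynomial.X ^ q.d)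
      (Polynomial.X ^ (q.d + 1))]
  rw [show (∑ i ∈ Finset.range (L - 2), if 2 + i ∈ q.ddes then 1 else 0) = q.d - 2
      from by omega]
  rw [show (L - 2) - (q.d - 2) = L - q.d from by omega,
    show q.d - 1 = (q.d - 2) + 1 from by omega, succ_nsmul]
  norm_num
  abel

lemma sum_slot_true_01 (q : SignedPerm L) (hL : 2 ≤ L) (h01 : q.type01) :
    ∑ v ∈ Finset.range (L + 1), slot q true v
      = (q.d - 1) • Polynomial.X ^ q.d + (L + 1 - q.d) • Polynomial.X ^ (q.d + 1) := by
  have hdec := d_decomp q hL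
  rw [if_pos h01.1, if_pos h01.2] at hdec
  have hle := cnt_le (L - 2) (fun i => 2 + i ∈ q.ddes)
  rw [sum_split (L + 1) 2 (by omega), Finset.sum_range_succ _ 1, Finset.sum_range_one,
    slot_v0, slot_v1_true q hL, if_pos h01.1, if_pos h01.2,
    show q.d + 2 - 1 - 1 = q.d from by omega,
    show L + 1 - 2 = (L - 2) + 1 from by omega, Finset.sum_range_succ]
  rw [show 2 + (L - 2) = L from by omega, slot_last q true hL h01]
  have hmid : ∀ i ∈ Finset.range (L - 2),
      slot q true (2 + i)
        = if 2 + i ∈ q.ddes then Polynomial.X ^ q.d else Polynomial.X ^ (q.d + 1) := by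
    intro i hi
    exact slot_mid q true (by omega) (by have := Finset.mem_range.mp hi; omega) h01
  rw [Finset.sum_congr rfl hmid,
    sum_ite_const (L - 2) (fun i => 2 + i ∈ q.ddes) (Polynomial.X ^ q.d)
      (Polynomial.X ^ (q.d + 1))]
  rw [show (∑ i ∈ Finset.range (L - 2), if 2 + i ∈ q.ddes then 1 else 0) = q.d - 2
      from by omega]
  rw [show (L - 2) - (q.d - 2) = L - q.d from by omega,
    show q.d - 1 = (q.d - 2) + 1 from by omega,
    show L + 1 - q.d = (L - q.d) + 1 from by omega, succ_nsmul, succ_nsmul]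
  norm_num
  abel

lemma sum_slot_false_not01 (q : SignedPerm L) (hL : 2 ≤ L) (h01 : ¬ q.type01) :
    ∑ v ∈ Finset.range (L + 1), slot q false v = 0 := by
  refine Finset.sum_eq_zero fun v hv => ?_
  have hvr := Finset.mem_range.mp hv
  match v with
  | 0 => exact slot_v0 q false
  | 1 => exact slot_v1_false q hL
  | (v + 2) => exact slot_ge2_not01 q false (by omega) hvr h01

lemma sum_slot_true_not01 (q : SignedPerm L) (hL : 2 ≤ L) (h01 : ¬ q.type01) :
    ∑ v ∈ Finset.range (L + 1), slot q true v
      = Polynomial.X ^ (q.d + 2 - (if 0 ∈ q.ddes then 1 else 0)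
          - (if 1 ∈ q.ddes then 1 else 0)) := by
  rw [sum_split (L + 1) 2 (by omega), Finset.sum_range_succ _ 1, Finset.sum_range_one,
    slot_v0, slot_v1_true q hL]
  have htail : ∀ i ∈ Finset.range (L + 1 - 2), slot q true (2 + i) = 0 := by
    intro i hi
    exact slot_ge2_not01 q true (by omega)
      (by have := Finset.mem_range.mp hi; omega) h01
  rw [Finset.sum_congr rfl htail, Finset.sum_const, smul_zero]
  norm_num


lemma d_le (q : SignedPerm L) : q.d ≤ L := by
  rw [SignedPerm.d, SignedPerm.ddes]
  exact (Finset.card_filter_le _ _).trans (by rw [Finset.card_range])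

lemma two_le_d {q : SignedPerm L} (h : q.type01) : 2 ≤ q.d := by
  have hsub : ({0, 1} : Finset ℕ) ⊆ q.ddes := by
    intro x hx
    rcases Finset.mem_insert.mp hx with rfl | hx
    · exact h.1
    · rw [Finset.mem_singleton.mp hx]; exact h.2
  have := Finset.card_le_card hsub
  rwa [show ({0, 1} : Finset ℕ).card = 2 from rfl] at this

open Polynomial in
lemma key01 (K m : ℕ) (h2 : 2 ≤ m) (hK : m ≤ K + 2) :
    (m - 1) • (X : Polynomial ℚ) ^ m + (K + 2 - m) • X ^ (m + 1)
      + ((m - 1) • X ^ m + (K + 2 + 1 - m) • X ^ (m + 1))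
      = (C (2 * ((K + 3 : ℕ) : ℚ) - 1) * X - 2) * X ^ m
        + 2 * X * (1 - X) * (C ((m : ℕ) : ℚ) * X ^ (m - 1)) := by
  obtain ⟨a, rfl⟩ : ∃ a, m = a + 2 := ⟨m - 2, by omega⟩
  obtain ⟨c, rfl⟩ : ∃ c, K = a + c := ⟨K - a, by omega⟩
  rw [show a + 2 - 1 = a + 1 from rfl, show a + c + 2 - (a + 2) = c from by omega,
    show a + c + 2 + 1 - (a + 2) = c + 1 from by omega]
  simp only [nsmul_eq_mul]
  rw [show (2 * ((a + c + 3 : ℕ) : ℚ) - 1) = ((2 * (a + c) + 5 : ℕ) : ℚ) from by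
    push_cast; ring]
  rw [Polynomial.C_eq_natCast, Polynomial.C_eq_natCast]
  push_cast
  ring

end SignedPerm

set_option maxHeartbeats 1600000 in
open Polynomial in
/-- **Proposition 3.3 (ii).** Difference-differential equation for `D_n^{0,1}(t)`. -/
theorem polyD01_recurrence (n : ℕ) (hn : 3 ≤ n) :
    polyD01 n = (C (2 * (n : ℚ) - 1) * X - 2) * polyD01 (n - 1)
      + 2 * X * (1 - X) * derivative (polyD01 (n - 1))
      + X * polyD1 (n - 1) + X ^ 2 * polyDGe2 (n - 1) + X * polyD0Ge2 (n - 1) := by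
  obtain ⟨K, rfl⟩ : ∃ K, n = K + 3 := ⟨n - 3, by omega⟩
  rw [show K + 3 - 1 = K + 2 from by omega]
  have e2 : ∀ q : SignedPerm (K + 2),
      (∑ j : Fin (K + 3), ∑ s : Bool,
        if (SignedPerm.ins q j s).inD ∧ (SignedPerm.ins q j s).type01
          then (Polynomial.X : Polynomial ℚ) ^ ((SignedPerm.ins q j s).d) else 0)
      = if q.inD
        then (∑ j : Fin (K + 3), if (SignedPerm.ins q j false).type01
          then Polynomial.X ^ ((SignedPerm.ins q j false).d) else 0)
        else (∑ j : Fin (K + 3), if (SignedPerm.ins q j true).type01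
          then Polynomial.X ^ ((SignedPerm.ins q j true).d) else 0) := by
    intro q
    by_cases hq : q.inD
    · rw [if_pos hq]
      refine Finset.sum_congr rfl fun j _ => ?_
      rw [Fintype.sum_bool,
        if_neg (show ¬((SignedPerm.ins q j true).inD ∧ (SignedPerm.ins q j true).type01)
          from fun h => (SignedPerm.inD_ins_true q j).mp h.1 hq), zero_add,
        if_congr (and_iff_right ((SignedPerm.inD_ins_false q j).mpr hq)) rfl rfl]
    · rw [if_neg hq]
      refine Finset.sum_congr rfl fun j _ => ?_
      rw [Fintype.sum_bool,
        if_neg (show ¬((SignedPerm.ins q j false).inD ∧ (SignedPerm.ins q j false).type01)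
          from fun h => hq ((SignedPerm.inD_ins_false q j).mp h.1)), add_zero,
        if_congr (and_iff_right ((SignedPerm.inD_ins_true q j).mpr hq)) rfl rfl]
  have e1 : polyD01 (K + 3)
      = ∑ q ∈ Finset.univ.filter (fun q : SignedPerm (K + 2) => q.inD),
          (∑ v ∈ Finset.range (K + 3), SignedPerm.slot q false v
            + ∑ v ∈ Finset.range (K + 3), SignedPerm.slot (SignedPerm.sigma q) true v) := by
    rw [polyD01, Finset.sum_filter, SignedPerm.sum_ins]
    rw [Finset.sum_congr rfl (fun q _ => e2 q)]
    rw [Finset.sum_ite]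
    have e3 : (∑ q ∈ Finset.univ.filter (fun q : SignedPerm (K + 2) => ¬ q.inD),
          (∑ j : Fin (K + 3), if (SignedPerm.ins q j true).type01
            then (Polynomial.X : Polynomial ℚ) ^ ((SignedPerm.ins q j true).d) else 0))
        = ∑ q ∈ Finset.univ.filter (fun q : SignedPerm (K + 2) => q.inD),
          (∑ j : Fin (K + 3), if (SignedPerm.ins (SignedPerm.sigma q) j true).type01
            then Polynomial.X ^ ((SignedPerm.ins (SignedPerm.sigma q) j true).d) else 0) := by
      refine Finset.sum_nbij' SignedPerm.sigma SignedPerm.sigma ?_ ?_ ?_ ?_ ?_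
      · intro a ha
        rw [Finset.mem_filter] at ha ⊢
        exact ⟨Finset.mem_univ _, (SignedPerm.inD_sigma a).mpr ha.2⟩
      · intro a ha
        rw [Finset.mem_filter] at ha ⊢
        refine ⟨Finset.mem_univ _, fun hcon => ?_⟩
        exact ((SignedPerm.inD_sigma a).mp hcon) ha.2
      · intro a _
        exact SignedPerm.sigma_sigma a
      · intro a _
        exact SignedPerm.sigma_sigma a
      · intro a _
        rw [SignedPerm.sigma_sigma]
    rw [e3, ← Finset.sum_add_distrib]
    refine Finset.sum_congr rfl fun q _ => ?_
    rw [SignedPerm.sum_slot, SignedPerm.sum_slot]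
  have split4 : ∀ G : SignedPerm (K + 2) → Polynomial ℚ,
      ∑ q ∈ Finset.univ.filter (fun q : SignedPerm (K + 2) => q.inD), G q
        = ∑ q ∈ Finset.univ.filter
            (fun q : SignedPerm (K + 2) => q.inD ∧ q.type01), G q
          + ∑ q ∈ Finset.univ.filter
              (fun q : SignedPerm (K + 2) => q.inD ∧ q.type1), G q
          + ∑ q ∈ Finset.univ.filter
              (fun q : SignedPerm (K + 2) => q.inD ∧ q.typeGe2), G q
          + ∑ q ∈ Finset.univ.filter
              (fun q : SignedPerm (K + 2) => q.inD ∧ q.type0Ge2), G q := by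
    intro G
    rw [Finset.sum_filter, Finset.sum_filter, Finset.sum_filter, Finset.sum_filter,
      Finset.sum_filter, ← Finset.sum_add_distrib, ← Finset.sum_add_distrib,
      ← Finset.sum_add_distrib]
    refine Finset.sum_congr rfl fun q _ => ?_
    unfold SignedPerm.type01 SignedPerm.type1 SignedPerm.typeGe2 SignedPerm.type0Ge2
    by_cases h0 : 0 ∈ q.ddes <;> by_cases h1 : 1 ∈ q.ddes <;>
      by_cases hD : q.inD <;> simp [h0, h1, hD]
  rw [e1, split4]
  have h01 : ∑ q ∈ Finset.univ.filter
        (fun q : SignedPerm (K + 2) => q.inD ∧ q.type01),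
        (∑ v ∈ Finset.range (K + 3), SignedPerm.slot q false v
          + ∑ v ∈ Finset.range (K + 3), SignedPerm.slot (SignedPerm.sigma q) true v)
      = ∑ q ∈ Finset.univ.filter
          (fun q : SignedPerm (K + 2) => q.inD ∧ q.type01),
          ((C (2 * ((K + 3 : ℕ) : ℚ) - 1) * X - 2) * X ^ q.d
            + 2 * X * (1 - X) * derivative (X ^ q.d)) := by
    refine Finset.sum_congr rfl fun q hq => ?_
    have hq' := (Finset.mem_filter.mp hq).2
    rw [SignedPerm.sum_slot_false_01 q (by omega) hq'.2,
      SignedPerm.sum_slot_true_01 (SignedPerm.sigma q) (by omega)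
        ((SignedPerm.type01_sigma q).mpr hq'.2),
      SignedPerm.d_sigma, Polynomial.derivative_X_pow]
    exact SignedPerm.key01 K q.d (SignedPerm.two_le_d hq'.2) (SignedPerm.d_le q)
  have htr : ∀ (q : SignedPerm (K + 2)), ¬ q.type01 →
      (∑ v ∈ Finset.range (K + 3), SignedPerm.slot q false v
        + ∑ v ∈ Finset.range (K + 3), SignedPerm.slot (SignedPerm.sigma q) true v)
      = (Polynomial.X : Polynomial ℚ) ^ (q.d + 2 - (if 1 ∈ q.ddes then 1 else 0)
          - (if 0 ∈ q.ddes then 1 else 0)) := by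
    intro q hn01
    rw [SignedPerm.sum_slot_false_not01 q (by omega) hn01,
      SignedPerm.sum_slot_true_not01 (SignedPerm.sigma q) (by omega)
        (fun h => hn01 ((SignedPerm.type01_sigma q).mp h)),
      SignedPerm.d_sigma, zero_add]
    simp only [SignedPerm.zero_mem_ddes_sigma, SignedPerm.one_mem_ddes_sigma]
  have h1 : ∑ q ∈ Finset.univ.filter
        (fun q : SignedPerm (K + 2) => q.inD ∧ q.type1),
        (∑ v ∈ Finset.range (K + 3), SignedPerm.slot q false v
          + ∑ v ∈ Finset.range (K + 3), SignedPerm.slot (SignedPerm.sigma q) true v)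
      = ∑ q ∈ Finset.univ.filter
          (fun q : SignedPerm (K + 2) => q.inD ∧ q.type1), (X * X ^ q.d) := by
    refine Finset.sum_congr rfl fun q hq => ?_
    have hq' := (Finset.mem_filter.mp hq).2.2
    rw [htr q (fun h => hq'.2 h.1), if_pos hq'.1, if_neg hq'.2,
      show q.d + 2 - 1 - 0 = q.d + 1 from by omega, pow_succ]
    ring
  have hGe2 : ∑ q ∈ Finset.univ.filter
        (fun q : SignedPerm (K + 2) => q.inD ∧ q.typeGe2),
        (∑ v ∈ Finset.range (K + 3), SignedPerm.slot q false v
          + ∑ v ∈ Finset.range (K + 3), SignedPerm.slot (SignedPerm.sigma q) true v)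
      = ∑ q ∈ Finset.univ.filter
          (fun q : SignedPerm (K + 2) => q.inD ∧ q.typeGe2), (X ^ 2 * X ^ q.d) := by
    refine Finset.sum_congr rfl fun q hq => ?_
    have hq' := (Finset.mem_filter.mp hq).2.2
    rw [htr q (fun h => hq'.2 h.2), if_neg hq'.2, if_neg hq'.1,
      show q.d + 2 - 0 - 0 = q.d + 2 from by omega, pow_add]
    ring
  have h0Ge2 : ∑ q ∈ Finset.univ.filter
        (fun q : SignedPerm (K + 2) => q.inD ∧ q.type0Ge2),
        (∑ v ∈ Finset.range (K + 3), SignedPerm.slot q false v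
          + ∑ v ∈ Finset.range (K + 3), SignedPerm.slot (SignedPerm.sigma q) true v)
      = ∑ q ∈ Finset.univ.filter
          (fun q : SignedPerm (K + 2) => q.inD ∧ q.type0Ge2), (X * X ^ q.d) := by
    refine Finset.sum_congr rfl fun q hq => ?_
    have hq' := (Finset.mem_filter.mp hq).2.2
    rw [htr q (fun h => hq'.2 h.2), if_neg hq'.2, if_pos hq'.1,
      show q.d + 2 - 0 - 1 = q.d + 1 from by omega, pow_succ]
    ring
  rw [h01, h1, hGe2, h0Ge2]
  rw [polyD01, polyD1, polyDGe2, polyD0Ge2, derivative_sum,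
    Finset.mul_sum, Finset.mul_sum, Finset.mul_sum, Finset.mul_sum, Finset.mul_sum,
    ← Finset.sum_add_distrib]
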